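/- With Φ_α(Z,U) = det of the matrix formed by the first n+1−α rows of the generic upper unitriangular (n+1)×(n+1) matrix Z and the first α rows of U^{ext} (the generic n×n unipotent matrix U extended by a zero column), we have ∂Φ_α/∂z_{1(n+1)} = R_{1α}^u Ψ_{α−1} for 2 ≤ α ≤ n, and ∂Φ_1/∂z_{1(n+1)} = −1, where Ψ_{α−1} is the determinant of the first n−α+1 rows of Z^{cut} stacked on the first α−1 rows of U, and R^u is the Zhelobenko operator in the u-variables. -/

import Mathlib

open MvPolynomial

/-- Polynomials in two families of variables: the entries `z_{ij}` (left summand,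
1-based) of the generic upper unitriangular `(n+1) × (n+1)` matrix `Z`, and the
entries `u_{kl}` (right summand, 1-based) of the generic upper unitriangular
`n × n` matrix `U`. -/
abbrev Pzu : Type := MvPolynomial ((ℕ × ℕ) ⊕ (ℕ × ℕ)) ℂ

/-- The variable `z_{ij}`. -/
noncomputable def zv (i j : ℕ) : Pzu := X (Sum.inl (i, j))

/-- The variable `u_{ij}`. -/
noncomputable def uv (i j : ℕ) : Pzu := X (Sum.inr (i, j))

/-- The `j`-th entry of the `i`-th row (1-based) of the generic upper
unitriangular matrix `Z`. -/
noncomputable def Zrow (i j : ℕ) : Pzu :=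
  if i = j then 1 else if i < j then zv i j else 0

/-- The `j`-th entry of the `i`-th row (1-based) of the generic upper
unitriangular matrix `U`. -/
noncomputable def Urow (i j : ℕ) : Pzu :=
  if i = j then 1 else if i < j then uv i j else 0

/-- The `i`-th row of `U^{ext}`, i.e. of `U` with a zero `(n+1)`-st column
appended. -/
noncomputable def UextRow (n i j : ℕ) : Pzu :=
  if j ≤ n then Urow i j else 0

/-- The Zhelobenko operator `R^u_{kl} = ∂/∂u_{kl} + ∑_{j>l} u_{lj} ∂/∂u_{kj}`
in the `u`-variables (which range over `1 ≤ i < j ≤ n`). -/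
noncomputable def Ru (n k l : ℕ) (p : Pzu) : Pzu :=
  pderiv (Sum.inr (k, l)) p +
    ∑ j ∈ Finset.Icc (l + 1) n, uv l j * pderiv (Sum.inr (k, j)) p

/-- The Zhelobenko operator `R^z_{kl} = ∂/∂z_{kl} + ∑_{j>l} z_{lj} ∂/∂z_{kj}`
in the `z`-variables (which range over `1 ≤ i < j ≤ n+1`). -/
noncomputable def Rz (n k l : ℕ) (p : Pzu) : Pzu :=
  pderiv (Sum.inl (k, l)) p +
    ∑ j ∈ Finset.Icc (l + 1) (n + 1), zv l j * pderiv (Sum.inl (k, j)) p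

/-- `Φ_α`: the determinant of the `(n+1) × (n+1)` matrix whose rows are the
first `n+1−α` rows of `Z` followed by the first `α` rows of `U^{ext}`. -/
noncomputable def Phi (n α : ℕ) : Pzu :=
  Matrix.det (Matrix.of fun a b : Fin (n + 1) =>
    if (a : ℕ) + 1 ≤ n + 1 - α then Zrow ((a : ℕ) + 1) ((b : ℕ) + 1)
    else UextRow n ((a : ℕ) + 1 - (n + 1 - α)) ((b : ℕ) + 1))

/-- `Ψ_α`: the determinant of the `n × n` matrix whose rows are the first `n−α`
rows of `Z^{cut}` (`Z` with its last column deleted) followed by the first `α`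
rows of `U`. -/
noncomputable def Psi (n α : ℕ) : Pzu :=
  Matrix.det (Matrix.of fun a b : Fin n =>
    if (a : ℕ) + 1 ≤ n - α then Zrow ((a : ℕ) + 1) ((b : ℕ) + 1)
    else Urow ((a : ℕ) + 1 - (n - α)) ((b : ℕ) + 1))

/-! Both sides are determinants hit by a derivation that only sees one row. `∂/∂z_{1(n+1)}`
touches only the entry `z_{1(n+1)}` in the first row of `Φ_α`, and `R^u_{1α}` is itself a
derivation which kills `Z` and every row of `U` except the first, which it maps to the
`α`-th row. So `∂Φ_α/∂z_{1(n+1)}` is `Φ_α` with its first row replaced by `e_{n+1}`, i.e.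
`(-1)^n` times the minor at `(1, n+1)`, and `R^u_{1α} Ψ_{α-1}` is `Ψ_{α-1}` with the first
row of `U` replaced by the `α`-th. In both matrices the first column is a unit vector;
expanding along it leaves the same rows, up to moving `U_α` past `α - 2` rows, and the signs
`(-1)^n`, `(-1)^(n-α)`, `(-1)^(α-2)` cancel. For `α = 1` the remaining minor is
unitriangular. -/

namespace Derivation

variable {R A : Type*} [CommRing R] [CommRing A] [Algebra R A] (D : Derivation R A A)

theorem map_finset_prod {ι : Type*} [DecidableEq ι] (s : Finset ι) (f : ι → A) :
    D (∏ i ∈ s, f i) = ∑ i ∈ s, (∏ j ∈ s.erase i, f j) * D (f i) := by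
  induction s using Finset.induction_on with
  | empty => simp
  | @insert a s ha ih =>
    rw [Finset.prod_insert ha, leibniz, ih, Finset.sum_insert ha, Finset.erase_insert ha,
      smul_eq_mul, smul_eq_mul, Finset.mul_sum, add_comm]
    congr 1
    refine Finset.sum_congr rfl fun i hi => ?_
    rw [Finset.erase_insert_of_ne (ne_of_mem_of_not_mem hi ha).symm,
      Finset.prod_insert fun h => ha (Finset.mem_of_mem_erase h)]
    ring

theorem map_det {n : Type*} [Fintype n] [DecidableEq n] (M : Matrix n n A) :
    D M.det = ∑ i, (M.updateRow i fun j => D (M i j)).det := by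
  simp_rw [← Matrix.det_transpose (M.updateRow _ _), ← M.det_transpose, Matrix.det_apply,
    map_sum, Units.smul_def, map_zsmul, map_finset_prod, Finset.smul_sum]
  rw [Finset.sum_comm]
  refine Finset.sum_congr rfl fun i _ => Finset.sum_congr rfl fun σ _ => ?_
  rw [← Finset.mul_prod_erase _ _ (Finset.mem_univ i), mul_comm]
  congr 2
  · simp
  · exact Finset.prod_congr rfl fun j hj => by
      simp [Matrix.updateRow_ne (Finset.ne_of_mem_erase hj)]

theorem map_det_eq_det_updateRow {n : Type*} [Fintype n] [DecidableEq n] (M : Matrix n n A)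
    (r : n) (h : ∀ i ≠ r, ∀ j, D (M i j) = 0) :
    D M.det = (M.updateRow r fun j => D (M r j)).det := by
  rw [map_det, Finset.sum_eq_single r (fun i _ hi => Matrix.det_eq_zero_of_row_eq_zero i
    fun j => by simp [h i hi]) (by simp)]

end Derivation

lemma Fin.val_succAbove_eq_ite {m : ℕ} (p : Fin (m + 1)) (i : Fin m) :
    (p.succAbove i : ℕ) = if (i : ℕ) < p then (i : ℕ) else i + 1 := by
  rcases lt_or_ge (i : ℕ) p with h | h
  · rw [Fin.succAbove_of_castSucc_lt _ _ h, if_pos h, Fin.val_castSucc]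
  · rw [Fin.succAbove_of_le_castSucc _ _ h, if_neg (by omega), Fin.val_succ]

lemma Fin.val_cycleIcc_last {m : ℕ} (q a : Fin (m + 1)) :
    (Fin.cycleIcc q (Fin.last m) a : ℕ) =
      if (a : ℕ) < q then (a : ℕ) else if (a : ℕ) = m then (q : ℕ) else a + 1 := by
  rcases lt_or_ge a q with h | h
  · rw [Fin.cycleIcc_of_lt h, if_pos (Fin.lt_def.1 h)]
  · rw [Fin.cycleIcc_of_le_of_le h (Fin.le_last a), if_neg (not_lt.2 (Fin.le_def.1 h))]
    by_cases ha : a = Fin.last m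
    · simp [ha]
    · rw [if_neg ha, if_neg (show (a : ℕ) ≠ m from fun h' => ha (Fin.ext h')),
        Fin.val_add_one_of_lt (Fin.lt_last_iff_ne_last.2 ha)]

namespace Matrix

variable {R : Type*} [CommRing R] {m : ℕ}

theorem det_updateRow_single_one (A : Matrix (Fin (m + 1)) (Fin (m + 1)) R) (i j : Fin (m + 1)) :
    (A.updateRow i (Pi.single j 1)).det =
      (-1) ^ (i + j : ℕ) * (A.submatrix i.succAbove j.succAbove).det := by
  rw [← adjugate_apply, adjugate_fin_succ_eq_det_submatrix]

theorem det_eq_of_col_eq_single (A : Matrix (Fin (m + 1)) (Fin (m + 1)) R) (i j : Fin (m + 1))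
    (h : ∀ a, A a j = (Pi.single i 1 : Fin (m + 1) → R) a) :
    A.det = (-1) ^ (i + j : ℕ) * (A.submatrix i.succAbove j.succAbove).det := by
  have hA : Aᵀ = Aᵀ.updateRow j (Pi.single i 1) := by
    ext a b; by_cases ha : a = j <;> simp [ha, h]
  rw [← det_transpose, hA, det_updateRow_single_one, add_comm, ← det_transpose]
  rfl

end Matrix

lemma pderiv_inl_Zrow {k l : ℕ} (hkl : k < l) (i j : ℕ) :
    pderiv (Sum.inl (k, l)) (Zrow i j) = if i = k ∧ j = l then 1 else 0 := by
  unfold Zrow zv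
  split_ifs <;> simp_all [pderiv_X]

lemma pderiv_inr_Urow {k l : ℕ} (hkl : k < l) (i j : ℕ) :
    pderiv (Sum.inr (k, l)) (Urow i j) = if i = k ∧ j = l then 1 else 0 := by
  unfold Urow uv
  split_ifs <;> simp_all [pderiv_X]

lemma pderiv_inr_Zrow (w : ℕ × ℕ) (i j : ℕ) : pderiv (Sum.inr w) (Zrow i j) = 0 := by
  unfold Zrow zv
  split_ifs <;> simp [pderiv_X]

lemma pderiv_inl_Urow (w : ℕ × ℕ) (i j : ℕ) : pderiv (Sum.inl w) (Urow i j) = 0 := by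
  unfold Urow uv
  split_ifs <;> simp [pderiv_X]

noncomputable def zhelobenkoU (n k l : ℕ) : Derivation ℂ Pzu Pzu :=
  pderiv (Sum.inr (k, l)) + ∑ j ∈ Finset.Icc (l + 1) n, uv l j • pderiv (Sum.inr (k, j))

lemma zhelobenkoU_apply (n k l : ℕ) (p : Pzu) : zhelobenkoU n k l p = Ru n k l p := by
  change pderiv _ p + Derivation.coeFnAddMonoidHom (∑ j ∈ _, _) p = _
  rw [map_sum, Finset.sum_apply]
  rfl

lemma zhelobenkoU_Zrow (n k l i j : ℕ) : zhelobenkoU n k l (Zrow i j) = 0 := by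
  simp [zhelobenkoU_apply, Ru, pderiv_inr_Zrow]

lemma zhelobenkoU_Urow {n k l j : ℕ} (hkl : k < l) (hj : j ≤ n) (i : ℕ) :
    zhelobenkoU n k l (Urow i j) = if i = k then Urow l j else 0 := by
  have hterm : ∀ m ∈ Finset.Icc (l + 1) n, uv l m * pderiv (Sum.inr (k, m)) (Urow i j) =
      if m = j then (if i = k then uv l j else 0) else 0 := fun m hm => by
    rw [pderiv_inr_Urow (by simp at hm; omega)]
    rcases eq_or_ne m j with rfl | hm
    · by_cases hi : i = k <;> simp [hi]
    · simp [hm, hm.symm]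
  rw [zhelobenkoU_apply, Ru, Finset.sum_congr rfl hterm, Finset.sum_ite_eq',
    pderiv_inr_Urow hkl]
  unfold Urow
  by_cases hi : i = k <;> simp only [hi, true_and, false_and, if_false, Finset.mem_Icc]
  · split_ifs <;> first | omega | rfl | simp
  · simp

noncomputable def phiMatrix (n α : ℕ) : Matrix (Fin (n + 1)) (Fin (n + 1)) Pzu :=
  Matrix.of fun a b : Fin (n + 1) =>
    if (a : ℕ) + 1 ≤ n + 1 - α then Zrow ((a : ℕ) + 1) ((b : ℕ) + 1)
    else UextRow n ((a : ℕ) + 1 - (n + 1 - α)) ((b : ℕ) + 1)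

noncomputable def psiMatrix (n α : ℕ) : Matrix (Fin n) (Fin n) Pzu :=
  Matrix.of fun a b : Fin n =>
    if (a : ℕ) + 1 ≤ n - α then Zrow ((a : ℕ) + 1) ((b : ℕ) + 1)
    else Urow ((a : ℕ) + 1 - (n - α)) ((b : ℕ) + 1)

/-- The minor of `phiMatrix n α` at `(1, n + 1)`. -/
noncomputable def phiMinor (n α : ℕ) : Matrix (Fin n) (Fin n) Pzu :=
  Matrix.of fun a b : Fin n =>
    if (a : ℕ) + 2 ≤ n + 1 - α then Zrow ((a : ℕ) + 2) ((b : ℕ) + 1)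
    else Urow ((a : ℕ) + 2 - (n + 1 - α)) ((b : ℕ) + 1)

lemma pderiv_Phi_eq_neg_one_pow_mul_det_phiMinor {n α : ℕ} (hα : 1 ≤ α) (hαn : α ≤ n) :
    pderiv (Sum.inl (1, n + 1)) (Phi n α) = (-1) ^ n * (phiMinor n α).det := by
  have hrow : (fun b => pderiv (Sum.inl (1, n + 1)) (phiMatrix n α 0 b)) =
      Pi.single (Fin.last n) 1 := by
    funext b
    rw [phiMatrix, Matrix.of_apply, if_pos (by simp; omega), pderiv_inl_Zrow (by omega),
      Pi.single_apply]
    simp [Fin.ext_iff]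
  have hrows : ∀ a ≠ 0, ∀ b, pderiv (Sum.inl (1, n + 1)) (phiMatrix n α a b) = 0 := by
    intro a ha b
    rw [Ne, Fin.ext_iff, Fin.val_zero] at ha
    rw [phiMatrix, Matrix.of_apply]
    split_ifs with h
    · rw [pderiv_inl_Zrow (by omega), if_neg (by omega)]
    · unfold UextRow
      split_ifs <;> simp [pderiv_inl_Urow]
  rw [Phi, ← phiMatrix, (pderiv _).map_det_eq_det_updateRow _ 0 hrows, hrow,
    Matrix.det_updateRow_single_one, Fin.succAbove_zero, Fin.succAbove_last]
  simp only [Fin.val_zero, Fin.val_last, zero_add]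
  congr 2
  ext a b
  simp only [phiMatrix, phiMinor, UextRow, Matrix.submatrix_apply, Matrix.of_apply, Fin.val_succ,
    Fin.val_castSucc, if_pos (Nat.succ_le_of_lt b.isLt)]

/-- `psiMatrix n (α - 1)` with the first row of `U` replaced by its `α`-th row. -/
noncomputable def ruPsiMatrix (n α : ℕ) : Matrix (Fin n) (Fin n) Pzu :=
  Matrix.of fun a b : Fin n =>
    if (a : ℕ) = n + 1 - α then Urow α ((b : ℕ) + 1)
    else if (a : ℕ) + 1 ≤ n + 1 - α then Zrow ((a : ℕ) + 1) ((b : ℕ) + 1)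
    else Urow ((a : ℕ) + α - n) ((b : ℕ) + 1)

lemma Ru_Psi_eq_det_ruPsiMatrix {n α : ℕ} (h2 : 2 ≤ α) (hαn : α ≤ n) :
    Ru n 1 α (Psi n (α - 1)) = (ruPsiMatrix n α).det := by
  let r : Fin n := ⟨n - α + 1, by omega⟩
  have hrows : ∀ a ≠ r, ∀ b, zhelobenkoU n 1 α (psiMatrix n (α - 1) a b) = 0 := by
    intro a ha b
    rw [Ne, Fin.ext_iff] at ha
    rw [psiMatrix, Matrix.of_apply]
    split_ifs
    · exact zhelobenkoU_Zrow ..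
    · rw [zhelobenkoU_Urow (by omega) b.isLt, if_neg (by simp only [r] at ha; omega)]
  rw [← zhelobenkoU_apply, Psi, ← psiMatrix,
    (zhelobenkoU n 1 α).map_det_eq_det_updateRow _ r hrows]
  congr 1
  refine Matrix.ext fun a b => ?_
  rw [Matrix.updateRow_apply, psiMatrix, ruPsiMatrix, Matrix.of_apply, Matrix.of_apply,
    Matrix.of_apply]
  simp only [Fin.ext_iff, r, show n - (α - 1) = n + 1 - α by omega,
    show n - α + 1 = n + 1 - α by omega]
  by_cases ha : (a : ℕ) = n + 1 - α
  · simp only [ha, if_true, show ¬n + 1 - α + 1 ≤ n + 1 - α by omega, if_false,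
      Nat.add_sub_cancel_left]
    rw [zhelobenkoU_Urow (by omega) b.isLt, if_pos rfl]
  · rw [if_neg ha, if_neg ha]
    split_ifs <;> first | rfl | omega | (congr 1; omega)

lemma det_phiMinor_one (m : ℕ) : (phiMinor (m + 1) 1).det = (-1) ^ m := by
  have hcol : ∀ a,
      phiMinor (m + 1) 1 a 0 = (Pi.single (Fin.last m) 1 : Fin (m + 1) → Pzu) a := by
    intro a
    simp only [phiMinor, Matrix.of_apply, Pi.single_apply, Fin.ext_iff, Fin.val_last, Fin.val_zero]
    unfold Zrow Urow
    split_ifs <;> first | rfl | omega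
  have htri : ((phiMinor (m + 1) 1).submatrix Fin.castSucc Fin.succ).IsUpperTriangular := by
    intro i j hij
    change (j : ℕ) < i at hij
    simp only [phiMinor, Matrix.submatrix_apply, Matrix.of_apply, Fin.val_castSucc, Fin.val_succ]
    rw [if_pos (by omega)]
    unfold Zrow
    split_ifs <;> first | rfl | omega
  rw [Matrix.det_eq_of_col_eq_single _ _ _ hcol, Fin.succAbove_last, Fin.succAbove_zero,
    Matrix.det_of_isUpperTriangular htri, Finset.prod_eq_one, Fin.val_last, Fin.val_zero, add_zero,
    mul_one]
  intro i _
  simp only [phiMinor, Matrix.submatrix_apply, Matrix.of_apply, Fin.val_castSucc, Fin.val_succ]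
  rw [if_pos (by omega)]
  simp [Zrow]

lemma neg_one_pow_mul_det_phiMinor {n α : ℕ} (h2 : 2 ≤ α) (hαn : α ≤ n) :
    (-1) ^ n * (phiMinor n α).det = (ruPsiMatrix n α).det := by
  obtain ⟨k, rfl⟩ : ∃ k, n = k + 2 := ⟨n - 2, by omega⟩
  let p : Fin (k + 2) := ⟨k + 2 - α, by omega⟩
  let q : Fin (k + 1) := ⟨k + 2 - α, by omega⟩
  have hcolM : ∀ a, phiMinor (k + 2) α a 0 = (Pi.single p 1 : Fin (k + 2) → Pzu) a := by
    intro a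
    simp only [phiMinor, Matrix.of_apply, Pi.single_apply, Fin.ext_iff, Fin.val_zero, p]
    unfold Zrow Urow
    split_ifs <;> first | rfl | omega
  have hcolB : ∀ a, ruPsiMatrix (k + 2) α a 0 = (Pi.single 0 1 : Fin (k + 2) → Pzu) a := by
    intro a
    simp only [ruPsiMatrix, Matrix.of_apply, Pi.single_apply, Fin.ext_iff, Fin.val_zero]
    unfold Zrow Urow
    split_ifs <;> first | rfl | omega
  have hperm : (phiMinor (k + 2) α).submatrix p.succAbove Fin.succ =
      ((ruPsiMatrix (k + 2) α).submatrix Fin.succ Fin.succ).submatrix (Fin.cycleIcc q (Fin.last k)) id := by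
    refine Matrix.ext fun a b => ?_
    simp only [phiMinor, ruPsiMatrix, Matrix.submatrix_apply, Matrix.of_apply, Fin.val_succ, id,
      Fin.val_succAbove_eq_ite, Fin.val_cycleIcc_last, p, q]
    split_ifs <;> first | rfl | omega | (congr 1; omega)
  rw [Matrix.det_eq_of_col_eq_single _ _ _ hcolM, Matrix.det_eq_of_col_eq_single _ 0 0 hcolB,
    Fin.succAbove_zero, hperm, Matrix.det_permute, Fin.sign_cycleIcc_of_le (Fin.le_last q)]
  simp only [p, q, Fin.val_last, Fin.val_zero, add_zero, pow_zero, one_mul,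
    Units.val_pow_eq_pow_val, Units.val_neg, Units.val_one, Int.cast_pow, Int.cast_neg,
    Int.cast_one]
  rw [← mul_assoc, ← mul_assoc, ← pow_add, ← pow_add, Even.neg_one_pow ⟨k + 1, by omega⟩,
    one_mul]

/-- `∂Φ_α/∂z_{1(n+1)} = R^u_{1α} Ψ_{α−1}` for `2 ≤ α ≤ n`, and
`∂Φ_1/∂z_{1(n+1)} = −1`. -/
theorem dPhi_dz_top_right (n : ℕ) (hn : 1 ≤ n) :
    (∀ α : ℕ, 2 ≤ α → α ≤ n →
      pderiv (Sum.inl (1, n + 1)) (Phi n α) = Ru n 1 α (Psi n (α - 1))) ∧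
    pderiv (Sum.inl (1, n + 1)) (Phi n 1) = -1 := by
  refine ⟨fun α h2 hαn => ?_, ?_⟩
  · rw [pderiv_Phi_eq_neg_one_pow_mul_det_phiMinor (by omega) hαn,
      Ru_Psi_eq_det_ruPsiMatrix h2 hαn, neg_one_pow_mul_det_phiMinor h2 hαn]
  · obtain ⟨m, rfl⟩ : ∃ m, n = m + 1 := ⟨n - 1, by omega⟩
    rw [pderiv_Phi_eq_neg_one_pow_mul_det_phiMinor le_rfl hn, det_phiMinor_one, ← pow_add,
      Odd.neg_one_pow ⟨m, by ring⟩]
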